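/- Let M₀ be the structure whose universe is ^{ω≥}2 (the set of binary sequences of length at most ω), with unary predicates P^{M₀} = ^{ω>}2 (the finite binary sequences) and Q^{M₀} = ^ω2 (the infinite binary sequences), and binary relation R^{M₀} = {(a,b) : a ∈ ^ω2, b ∈ ^{ω>}2, and b is a proper initial segment of a}. Let T = Th(M₀) and let φ(x,y) be the atomic formula R(x,y). Then T is a complete first-order theory, the pair (T,φ) has SOP₂, and the pair (T,φ) does not have SOP₃. -/

import Mathlib

open FirstOrder Cardinal

namespace Shelah1064

/-! ### The structure `M₀` on `^{ω≥}2` with predicates `P`, `Q` and relation `R` -/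

inductive PQRRel : ℕ → Type
  | P : PQRRel 1
  | Q : PQRRel 1
  | R : PQRRel 2

/-- The vocabulary `τ = {P, Q, R}`. -/
def LPQR : Language := ⟨fun _ => Empty, PQRRel⟩

/-- The universe `^{ω≥}2`: binary sequences of length at most `ω`. -/
def BinSeqs : Type := List Bool ⊕ (ℕ → Bool)

/-- `b` is a (proper) initial segment of the infinite sequence `f`. -/
def IsProperInit (b : List Bool) (f : ℕ → Bool) : Prop :=
  ∀ (k : ℕ) (h : k < b.length), f k = b.get ⟨k, h⟩

instance : LPQR.Structure BinSeqs where
  funMap := fun F _ => F.elim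
  RelMap := fun {_} r x =>
    match r with
    | .P => ∃ l : List Bool, x 0 = Sum.inl l
    | .Q => ∃ f : ℕ → Bool, x 0 = Sum.inr f
    | .R => ∃ (f : ℕ → Bool) (l : List Bool),
        x 0 = Sum.inr f ∧ x 1 = Sum.inl l ∧ IsProperInit l f

/-- The theory `T = Th(M₀)`. -/
def TPQR : LPQR.Theory := LPQR.completeTheory BinSeqs

/-- The atomic formula `φ(x,y) = R(x,y)`. -/
def phiR : LPQR.Formula (Fin 1 ⊕ Fin 1) :=
  FirstOrder.Language.Relations.formula₂ (L := LPQR) (PQRRel.R : LPQR.Relations 2)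
    (FirstOrder.Language.Term.var (Sum.inl 0)) (FirstOrder.Language.Term.var (Sum.inr 0))

/-! ### SOP₂ and SOP₃ for a pair `(T, φ(x̄,ȳ))` with `ℓ(x̄) = ℓ(ȳ) = n` -/

/-- `M` is a model of `T` containing an increasing `φ`-chain `⟨ā_k : k < ω⟩`. -/
def SOP3Chain {L : Language} (Tth : L.Theory) {n : ℕ} (φ : L.Formula (Fin n ⊕ Fin n))
    (M : Type*) [L.Structure M] : Prop :=
  M ⊨ Tth ∧ ∃ a : ℕ → Fin n → M, ∀ k m : ℕ, k < m → φ.Realize (Sum.elim (a k) (a m))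

/-- In the model `M` of `T` there is no `φ`-loop of length `1`, `2` or `3`. -/
def SOP3NoLoops {L : Language} (Tth : L.Theory) {n : ℕ} (φ : L.Formula (Fin n ⊕ Fin n))
    (M : Type*) [L.Structure M] : Prop :=
  M ⊨ Tth →
    (¬ ∃ x : Fin n → M, φ.Realize (Sum.elim x x)) ∧
    (¬ ∃ x₀ x₁ : Fin n → M, φ.Realize (Sum.elim x₀ x₁) ∧ φ.Realize (Sum.elim x₁ x₀)) ∧
    (¬ ∃ x₀ x₁ x₂ : Fin n → M, φ.Realize (Sum.elim x₀ x₁) ∧ φ.Realize (Sum.elim x₁ x₂) ∧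
        φ.Realize (Sum.elim x₂ x₀))

/-- The pair `(T, φ)` has `SOP₃`. -/
def SOP3 {L : Language} (Tth : L.Theory) {n : ℕ} (φ : L.Formula (Fin n ⊕ Fin n)) : Prop :=
  (∃ (M : Type) (iM : L.Structure M), @SOP3Chain L Tth n φ M iM) ∧
  ∀ (M : Type) (iM : L.Structure M), @SOP3NoLoops L Tth n φ M iM

/-- `M` is a model of `T` with a tree of tuples `⟨ā_η : η ∈ ^{ω>}2⟩` as in `SOP₂`: along
every branch the `φ`-instances are finitely satisfiable, while instances at incomparable
nodes are jointly unsatisfiable. -/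
def SOP2Witness {L : Language} (Tth : L.Theory) {n : ℕ} (φ : L.Formula (Fin n ⊕ Fin n))
    (M : Type*) [L.Structure M] : Prop :=
  M ⊨ Tth ∧ ∃ a : List Bool → Fin n → M,
    (∀ η : ℕ → Bool, ∀ s : Finset ℕ, ∃ x : Fin n → M,
      ∀ k ∈ s, φ.Realize (Sum.elim x (a (List.ofFn fun i : Fin k => η i)))) ∧
    (∀ η ν : List Bool, ¬ η <+: ν → ¬ ν <+: η →
      ¬ ∃ x : Fin n → M, φ.Realize (Sum.elim x (a η)) ∧ φ.Realize (Sum.elim x (a ν)))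

/-- The pair `(T, φ)` has `SOP₂`. -/
def SOP2 {L : Language} (Tth : L.Theory) {n : ℕ} (φ : L.Formula (Fin n ⊕ Fin n)) : Prop :=
  ∃ (M : Type) (iM : L.Structure M), @SOP2Witness L Tth n φ M iM

/-! In `M₀` the relation `R` only goes from infinite to finite sequences, so no element is both
an `R`-source and an `R`-target. This is a sentence of `T`, so no model of `T` has even a two-step
`R`-chain, and `SOP₃` fails. `SOP₂` is witnessed in `M₀` itself by `a_η = η`: a branch lies above
all its initial segments, while incomparable finite sequences have no common infinite extension.
Completeness holds because `T` is the theory of a structure. -/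

end Shelah1064

namespace FirstOrder.Language.Relations

variable {L : Language} (r : L.Relations 2)

def noTwoStepChain : L.Sentence :=
  ∀' ∀' ∀' ∼(r.boundedFormula₂ (&0) &1 ⊓ r.boundedFormula₂ (&1) &2)

open BoundedFormula Structure in
theorem realize_noTwoStepChain {M : Type*} [L.Structure M] :
    M ⊨ r.noTwoStepChain ↔ ∀ x y z : M, ¬ (RelMap r ![x, y] ∧ RelMap r ![y, z]) :=
  forall₃_congr fun _ _ _ ↦ not_congr <| realize_inf.trans (and_congr realize_rel₂ realize_rel₂)

end FirstOrder.Language.Relations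

namespace Shelah1064

open Language Structure

section SOP3

variable {L : Language} {T : L.Theory} {n : ℕ} {φ : L.Formula (Fin n ⊕ Fin n)}

theorem SOP3Chain.exists_two_step_chain {M : Type*} [L.Structure M] (h : SOP3Chain T φ M) :
    ∃ x y z : Fin n → M, φ.Realize (Sum.elim x y) ∧ φ.Realize (Sum.elim y z) :=
  let ⟨_, a, ha⟩ := h
  ⟨a 0, a 1, a 2, ha 0 1 one_pos, ha 1 2 one_lt_two⟩

theorem not_sop3_of_forall_model_not_two_step_chain
    (h : ∀ (M : Type) [L.Structure M], M ⊨ T →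
      ¬ ∃ x y z : Fin n → M, φ.Realize (Sum.elim x y) ∧ φ.Realize (Sum.elim y z)) :
    ¬ SOP3 T φ := by
  rintro ⟨⟨M, _, hM⟩, -⟩
  exact h M hM.1 hM.exists_two_step_chain

end SOP3

theorem IsProperInit.prefix_of_length_le {l l' : List Bool} {f : ℕ → Bool}
    (h : IsProperInit l f) (h' : IsProperInit l' f) (hle : l.length ≤ l'.length) : l <+: l' := by
  rw [List.prefix_iff_eq_take]
  refine List.ext_getElem (by simp [hle]) fun k hk _ => ?_
  have := h k hk
  have := h' k (hk.trans_le hle)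
  simp_all [List.getElem_take]

theorem IsProperInit.prefix_or_prefix {l l' : List Bool} {f : ℕ → Bool}
    (h : IsProperInit l f) (h' : IsProperInit l' f) : l <+: l' ∨ l' <+: l :=
  (le_total l.length l'.length).imp (h.prefix_of_length_le h') (h'.prefix_of_length_le h)

theorem isProperInit_ofFn (f : ℕ → Bool) (k : ℕ) :
    IsProperInit (List.ofFn fun i : Fin k => f i) f :=
  fun _ _ => by simp

theorem realize_phiR {M : Type*} [LPQR.Structure M] (x y : Fin 1 → M) :
    phiR.Realize (Sum.elim x y) ↔ RelMap (L := LPQR) PQRRel.R ![x 0, y 0] :=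
  Formula.realize_rel₂

instance : Nonempty BinSeqs := ⟨Sum.inl []⟩

theorem binSeqs_model_TPQR : BinSeqs ⊨ TPQR :=
  model_completeTheory (L := LPQR) (M := BinSeqs)

theorem realize_noTwoStepChain_R_of_model {M : Type*} [LPQR.Structure M] (hM : M ⊨ TPQR) :
    M ⊨ Relations.noTwoStepChain (L := LPQR) PQRRel.R := by
  refine hM.realize_of_mem _ (mem_completeTheory.2 ?_)
  refine (Relations.realize_noTwoStepChain (L := LPQR) PQRRel.R).2 ?_
  rintro x y z ⟨⟨-, l, -, hy, -⟩, ⟨f, -, hy', -, -⟩⟩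
  exact Sum.inl_ne_inr (hy.symm.trans hy')

theorem not_sop3_TPQR_phiR : ¬ SOP3 TPQR phiR := by
  refine not_sop3_of_forall_model_not_two_step_chain fun M _ hM ⟨x, y, z, hxy, hyz⟩ => ?_
  exact (Relations.realize_noTwoStepChain _).1 (realize_noTwoStepChain_R_of_model hM)
    (x 0) (y 0) (z 0) ⟨(realize_phiR x y).1 hxy, (realize_phiR y z).1 hyz⟩

theorem sop2Witness_binSeqs : SOP2Witness TPQR phiR BinSeqs := by
  refine ⟨binSeqs_model_TPQR, fun l _ => Sum.inl l,
    fun η _ => ⟨fun _ => Sum.inr η, fun k _ => ?_⟩, ?_⟩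
  · exact (realize_phiR _ _).2 ⟨η, _, rfl, rfl, isProperInit_ofFn η k⟩
  · rintro η ν hην hνη ⟨x, hη, hν⟩
    obtain ⟨f, _, hf, ⟨⟩, hfη⟩ := (realize_phiR _ _).1 hη
    obtain ⟨f', _, hf', ⟨⟩, hfν⟩ := (realize_phiR _ _).1 hν
    cases hf.symm.trans hf'
    exact (hfη.prefix_or_prefix hfν).elim hην hνη

/-- `T = Th(M₀)` is a complete first-order theory, the pair `(T, R(x,y))`
has `SOP₂`, and it does not have `SOP₃`. -/
theorem tpqr_complete_sop2_not_sop3 :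
    TPQR.IsComplete ∧ SOP2 TPQR phiR ∧ ¬ SOP3 TPQR phiR :=
  ⟨completeTheory.isComplete LPQR BinSeqs, ⟨BinSeqs, _, sop2Witness_binSeqs⟩, not_sop3_TPQR_phiR⟩

end Shelah1064
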